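/- (Lemma on saddle point systems, primal part.) For every vector f ∈ ℝ^{r·n_v}, the vector v̄ := (I_r ⊗ θ_r) · 𝒳⁻¹ · (I_r ⊗ φ_lᵀ) · f solves the saddle point problem: there exists ξ_v ∈ ℝ^{r·n_p} such that 𝒯 v̄ + (I_r ⊗ A12) ξ_v = f and (I_r ⊗ A21) v̄ = 0. -/

import Mathlib

/-!
Write `v̄ = Θ 𝒳⁻¹ Φ f` with `Φ = I_r ⊗ φ_lᵀ`, `Θ = I_r ⊗ θ_r` and `𝒳 = Φ 𝒯 Θ`. Then
`Φ 𝒯 Θ 𝒳⁻¹ Φ = Φ`, so the residual `f - 𝒯 v̄` lies in `ker Φ`. Since `Φ` acts blockwise,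
`ker (I_r ⊗ φ_lᵀ) ⊆ range (I_r ⊗ A12)` follows from `ker φ_lᵀ ⊆ range A12` block by block,
which produces `ξ_v`. The constraint holds because `(I_r ⊗ A21) Θ = I_r ⊗ (A21 θ_r) = 0`.
-/

open Matrix Kronecker

namespace Matrix

section Kronecker

variable {R l m n p : Type*} [Fintype l] [DecidableEq l]

theorem one_kronecker_mulVec_apply [CommSemiring R] [Fintype n] (A : Matrix m n R)
    (v : l × n → R) (i : l) (j : m) :
    (((1 : Matrix l l R) ⊗ₖ A) *ᵥ v) (i, j) = (A *ᵥ fun k => v (i, k)) j := by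
  simp [mulVec, dotProduct, Fintype.sum_prod_type, one_apply, ite_mul]

theorem ker_one_kronecker_le_range [CommSemiring R] [Fintype m] [Fintype n]
    {A : Matrix m n R} {B : Matrix p m R}
    (h : LinearMap.ker B.mulVecLin ≤ LinearMap.range A.mulVecLin) :
    LinearMap.ker ((1 : Matrix l l R) ⊗ₖ B).mulVecLin ≤
      LinearMap.range ((1 : Matrix l l R) ⊗ₖ A).mulVecLin := by
  intro g hg
  have hblock : ∀ i, ∃ ξ : n → R, A *ᵥ ξ = fun k => g (i, k) := fun i =>
    h <| funext fun j => by
      simpa [one_kronecker_mulVec_apply] using congrFun (hg : _ *ᵥ g = 0) (i, j)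
  choose ξ hξ using hblock
  exact ⟨fun q => ξ q.1 q.2, funext fun ⟨i, j⟩ => by
    rw [mulVecLin_apply, one_kronecker_mulVec_apply]; exact congrFun (hξ i) j⟩

end Kronecker

theorem mul_mul_mul_nonsing_inv_mul {R m k : Type*} [CommRing R] [Fintype m] [Fintype k]
    [DecidableEq k] (Φ : Matrix k m R) (T : Matrix m m R) (Θ : Matrix m k R)
    (h : IsUnit (Φ * T * Θ)) :
    Φ * T * (Θ * (Φ * T * Θ)⁻¹ * Φ) = Φ := by
  rw [← Matrix.mul_assoc, ← Matrix.mul_assoc,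
    mul_nonsing_inv _ ((isUnit_iff_isUnit_det _).mp h), Matrix.one_mul]

end Matrix

theorem saddle_point_primal_general (n_v n_p r : ℕ)
    (A12 : Matrix (Fin n_v) (Fin n_p) ℝ)
    (A21 : Matrix (Fin n_p) (Fin n_v) ℝ)
    (φl θr : Matrix (Fin n_v) (Fin (n_v - n_p)) ℝ)
    (hθ : A21 * θr = 0)
    (hφ : LinearMap.ker φl.transpose.mulVecLin ≤ LinearMap.range A12.mulVecLin)
    (T : Matrix (Fin r × Fin n_v) (Fin r × Fin n_v) ℝ)
    (X : Matrix (Fin r × Fin (n_v - n_p)) (Fin r × Fin (n_v - n_p)) ℝ)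
    (hX : X = ((1 : Matrix (Fin r) (Fin r) ℝ) ⊗ₖ φl.transpose) * T *
      ((1 : Matrix (Fin r) (Fin r) ℝ) ⊗ₖ θr))
    (hXunit : IsUnit X)
    (f : Fin r × Fin n_v → ℝ) :
    ∃ ξv : Fin r × Fin n_p → ℝ,
      T.mulVec ((((1 : Matrix (Fin r) (Fin r) ℝ) ⊗ₖ θr) * X⁻¹ *
          ((1 : Matrix (Fin r) (Fin r) ℝ) ⊗ₖ φl.transpose)).mulVec f) +
        (((1 : Matrix (Fin r) (Fin r) ℝ) ⊗ₖ A12).mulVec ξv) = f ∧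
      (((1 : Matrix (Fin r) (Fin r) ℝ) ⊗ₖ A21)).mulVec
        ((((1 : Matrix (Fin r) (Fin r) ℝ) ⊗ₖ θr) * X⁻¹ *
          ((1 : Matrix (Fin r) (Fin r) ℝ) ⊗ₖ φl.transpose)).mulVec f) = 0 := by
  subst hX
  set Φ := (1 : Matrix (Fin r) (Fin r) ℝ) ⊗ₖ φlᵀ
  set Θ := (1 : Matrix (Fin r) (Fin r) ℝ) ⊗ₖ θr
  set v := (Θ * (Φ * T * Θ)⁻¹ * Φ) *ᵥ f
  have hresidual : f - T *ᵥ v ∈ LinearMap.ker Φ.mulVecLin := by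
    rw [LinearMap.mem_ker, mulVecLin_apply, mulVec_sub, mulVec_mulVec, mulVec_mulVec,
      mul_mul_mul_nonsing_inv_mul Φ T Θ hXunit, sub_self]
  obtain ⟨ξ, hξ⟩ := ker_one_kronecker_le_range hφ hresidual
  have hconstraint : ((1 : Matrix (Fin r) (Fin r) ℝ) ⊗ₖ A21) * Θ = 0 := by
    rw [← mul_kronecker_mul, Matrix.one_mul, hθ, kronecker_zero]
  refine ⟨ξ, ?_, ?_⟩
  · rw [← mulVecLin_apply _ ξ, hξ, add_sub_cancel]
  · rw [mulVec_mulVec, ← Matrix.mul_assoc, ← Matrix.mul_assoc, hconstraint,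
      Matrix.zero_mul, Matrix.zero_mul, zero_mulVec]

theorem saddle_point_primal (n_v n_p r : ℕ) (hnv : 0 < n_v) (hnp : 0 < n_p) (hr : 0 < r)
    (hnp_le : n_p ≤ n_v)
    (A12 : Matrix (Fin n_v) (Fin n_p) ℝ)
    (A21 : Matrix (Fin n_p) (Fin n_v) ℝ)
    (φl θr : Matrix (Fin n_v) (Fin (n_v - n_p)) ℝ)
    (hθ : A21 * θr = 0)
    (hφ : LinearMap.ker φl.transpose.mulVecLin ≤ LinearMap.range A12.mulVecLin)
    (T : Matrix (Fin r × Fin n_v) (Fin r × Fin n_v) ℝ)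
    (X : Matrix (Fin r × Fin (n_v - n_p)) (Fin r × Fin (n_v - n_p)) ℝ)
    (hX : X = ((1 : Matrix (Fin r) (Fin r) ℝ) ⊗ₖ φl.transpose) * T *
      ((1 : Matrix (Fin r) (Fin r) ℝ) ⊗ₖ θr))
    (hXunit : IsUnit X)
    (f : Fin r × Fin n_v → ℝ) :
    ∃ ξv : Fin r × Fin n_p → ℝ,
      T.mulVec ((((1 : Matrix (Fin r) (Fin r) ℝ) ⊗ₖ θr) * X⁻¹ *
          ((1 : Matrix (Fin r) (Fin r) ℝ) ⊗ₖ φl.transpose)).mulVec f) +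
        (((1 : Matrix (Fin r) (Fin r) ℝ) ⊗ₖ A12).mulVec ξv) = f ∧
      (((1 : Matrix (Fin r) (Fin r) ℝ) ⊗ₖ A21)).mulVec
        ((((1 : Matrix (Fin r) (Fin r) ℝ) ⊗ₖ θr) * X⁻¹ *
          ((1 : Matrix (Fin r) (Fin r) ℝ) ⊗ₖ φl.transpose)).mulVec f) = 0 :=
  saddle_point_primal_general n_v n_p r A12 A21 φl θr hθ hφ T X hX hXunit f
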